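/- Let G be a connected simple graph on a finite vertex set that contains a cycle, and let S be its core, i.e., the unique maximal vertex set such that every vertex of S has at least two neighbors in S. Let F be the spanning subgraph of G whose edges are exactly those edges of G having at least one endpoint outside S. Then F is acyclic, and every connected component of F contains exactly one vertex of S. -/

import Mathlib

/-!
Let `F = outsideEdgesSubgraph G S`. Along a cycle of `F`, or along a path of `F` joining two
vertices of `S`, every vertex outside `S` has two neighbours on the walk, so adding the walk's
vertices to `S` keeps every vertex with two neighbours inside the set. By maximality of the core
the walk lies in `S`; but `F` has no edge inside `S`, so the walk is trivial. Conversely, `S`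
contains every cycle of `G`, hence is nonempty, and a `G`-walk towards `S` stays in `F` until it
first meets `S`.
-/

/-- The spanning subgraph of `G` whose edges are exactly those edges of `G`
having at least one endpoint outside `S`. -/
def outsideEdgesSubgraph {V : Type*} (G : SimpleGraph V) (S : Set V) :
    SimpleGraph V where
  Adj a b := G.Adj a b ∧ (a ∉ S ∨ b ∉ S)
  symm := by
    constructor
    rintro a b ⟨h, hs⟩
    exact ⟨h.symm, hs.symm⟩
  loopless := by
    constructor
    rintro a ⟨h, _⟩
    exact (G.ne_of_adj h) rfl

namespace SimpleGraph

variable {V : Type*} {G : SimpleGraph V}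

def MinDegTwoOn (G : SimpleGraph V) (T : Set V) : Prop :=
  ∀ v ∈ T, 2 ≤ (T ∩ G.neighborSet v).ncard

lemma MinDegTwoOn.union [Finite V] {S U : Set V} (hS : G.MinDegTwoOn S)
    (hU : ∀ v ∈ U, v ∉ S → 2 ≤ (U ∩ G.neighborSet v).ncard) :
    G.MinDegTwoOn (S ∪ U) := by
  intro v hv
  by_cases hvS : v ∈ S
  · exact (hS v hvS).trans <| Set.ncard_le_ncard
      (Set.inter_subset_inter_left _ Set.subset_union_left) (Set.toFinite _)
  · exact (hU v (hv.resolve_left hvS) hvS).trans <| Set.ncard_le_ncard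
      (Set.inter_subset_inter_left _ Set.subset_union_right) (Set.toFinite _)

lemma Walk.two_le_ncard_verts_inter_neighborSet {H : SimpleGraph V} (hHG : H ≤ G)
    {u v w : V} (p : H.Walk u v) (hw : 2 ≤ (p.toSubgraph.neighborSet w).ncard) :
    2 ≤ (p.toSubgraph.verts ∩ G.neighborSet w).ncard := by
  refine hw.trans <| Set.ncard_le_ncard (fun x hx => ⟨?_, ?_⟩)
    ((p.verts_toSubgraph ▸ p.support.finite_toSet).inter_of_left _)
  · exact p.toSubgraph.neighborSet_subset_verts w hx
  · exact hHG (p.toSubgraph.neighborSet_subset w hx)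

lemma Walk.IsCycle.minDegTwoOn_support {u : V} {c : G.Walk u u} (hc : c.IsCycle) :
    G.MinDegTwoOn {x | x ∈ c.support} := by
  intro x hx
  rw [← c.verts_toSubgraph]
  exact c.two_le_ncard_verts_inter_neighborSet le_rfl
    (hc.ncard_neighborSet_toSubgraph_eq_two hx).ge

end SimpleGraph

open SimpleGraph

namespace outsideEdgesSubgraph

variable {V : Type*} {G : SimpleGraph V} {S : Set V}

lemma le : outsideEdgesSubgraph G S ≤ G := fun _ _ h => h.1

lemma nil_of_support_subset {u v : V} (p : (outsideEdgesSubgraph G S).Walk u v)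
    (hp : ∀ x ∈ p.support, x ∈ S) : p.Nil := by
  cases p with
  | nil => exact Walk.Nil.nil
  | cons h q =>
    exfalso
    rcases h.2 with hu | hw
    · exact hu (hp _ (Walk.start_mem_support _))
    · exact hw (hp _ (by simp))

/-- By maximality of the core `S` such a walk lies inside `S`, where
`outsideEdgesSubgraph G S` has no edges. -/
lemma nil_of_two_le_ncard_neighborSet [Finite V] (hS₁ : G.MinDegTwoOn S)
    (hS₂ : ∀ T : Set V, G.MinDegTwoOn T → T ⊆ S) {u v : V}
    (p : (outsideEdgesSubgraph G S).Walk u v)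
    (hp : ∀ x ∈ p.support, x ∉ S → 2 ≤ (p.toSubgraph.neighborSet x).ncard) : p.Nil := by
  have hcore : G.MinDegTwoOn (S ∪ p.toSubgraph.verts) := hS₁.union fun x hx hxS =>
    p.two_le_ncard_verts_inter_neighborSet le (hp x (p.mem_verts_toSubgraph.mp hx) hxS)
  exact nil_of_support_subset p fun x hx =>
    hS₂ _ hcore (Or.inr (p.mem_verts_toSubgraph.mpr hx))

lemma isAcyclic [Finite V] (hS₁ : G.MinDegTwoOn S)
    (hS₂ : ∀ T : Set V, G.MinDegTwoOn T → T ⊆ S) : (outsideEdgesSubgraph G S).IsAcyclic :=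
  fun _ c hc => hc.not_nil <| nil_of_two_le_ncard_neighborSet hS₁ hS₂ c fun _ hx _ =>
    (hc.ncard_neighborSet_toSubgraph_eq_two hx).ge

lemma eq_of_reachable [Finite V] (hS₁ : G.MinDegTwoOn S)
    (hS₂ : ∀ T : Set V, G.MinDegTwoOn T → T ⊆ S) {u v : V} (hu : u ∈ S) (hv : v ∈ S)
    (huv : (outsideEdgesSubgraph G S).Reachable u v) : u = v := by
  classical
  obtain ⟨p, hp⟩ := huv.some.toPath
  refine (nil_of_two_le_ncard_neighborSet hS₁ hS₂ p fun x hx hxS => ?_).eq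
  obtain ⟨i, rfl, hi⟩ := Walk.mem_support_iff_exists_getVert.mp hx
  have hi0 : i ≠ 0 := by rintro rfl; exact hxS (by simpa using hu)
  have hil : i ≠ p.length := by rintro rfl; exact hxS (by simpa using hv)
  exact (hp.ncard_neighborSet_toSubgraph_internal_eq_two hi0 (by omega)).ge

lemma exists_reachable_mem {a b : V} (p : G.Walk a b) (hb : b ∈ S) :
    ∃ x ∈ S, (outsideEdgesSubgraph G S).Reachable a x := by
  induction p with
  | nil => exact ⟨_, hb, Reachable.refl _⟩
  | @cons a y _ h q ih =>
    by_cases haS : a ∈ S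
    · exact ⟨a, haS, Reachable.refl a⟩
    · obtain ⟨x, hx, hyx⟩ := ih hb
      have hay : (outsideEdgesSubgraph G S).Adj a y := ⟨h, .inl haS⟩
      exact ⟨x, hx, hay.reachable.trans hyx⟩

end outsideEdgesSubgraph

lemma SimpleGraph.ConnectedComponent.existsUnique_mem {V : Type*} {H : SimpleGraph V}
    {S : Set V} (hex : ∀ a, ∃ x ∈ S, H.Reachable a x)
    (huniq : ∀ x ∈ S, ∀ y ∈ S, H.Reachable x y → x = y) (c : H.ConnectedComponent) :
    ∃! v, v ∈ S ∧ H.connectedComponentMk v = c := by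
  obtain ⟨a, rfl⟩ := c.exists_rep
  obtain ⟨x, hx, hax⟩ := hex a
  refine ⟨x, ⟨hx, ConnectedComponent.eq.mpr hax.symm⟩, fun y ⟨hy, hya⟩ => ?_⟩
  exact huniq y hy x hx (ConnectedComponent.eq.mp (hya.trans (ConnectedComponent.eq.mpr hax)))

/-- Let `G` be a connected simple graph on a finite vertex set containing a
cycle, and let `S` be its core (the unique maximal vertex set in which every
vertex has at least two neighbors).  Then the spanning subgraph `F` consisting
of the edges of `G` with at least one endpoint outside `S` is acyclic, and
every connected component of `F` contains exactly one vertex of `S`. -/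
theorem core_attachment_forest {V : Type*} [Fintype V] (G : SimpleGraph V)
    (hconn : G.Connected) (hcyc : ¬ G.IsAcyclic) (S : Set V)
    (hS₁ : ∀ v ∈ S, 2 ≤ (S ∩ G.neighborSet v).ncard)
    (hS₂ : ∀ T : Set V, (∀ v ∈ T, 2 ≤ (T ∩ G.neighborSet v).ncard) → T ⊆ S) :
    (outsideEdgesSubgraph G S).IsAcyclic ∧
      ∀ c : (outsideEdgesSubgraph G S).ConnectedComponent,
        ∃! v : V, v ∈ S ∧ (outsideEdgesSubgraph G S).connectedComponentMk v = c := by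
  obtain ⟨u, c, hc⟩ : ∃ (u : V) (c : G.Walk u u), c.IsCycle := by
    simpa [IsAcyclic] using hcyc
  have hu : u ∈ S := hS₂ _ hc.minDegTwoOn_support c.start_mem_support
  refine ⟨outsideEdgesSubgraph.isAcyclic hS₁ hS₂, ConnectedComponent.existsUnique_mem ?_
    fun x hx y hy => outsideEdgesSubgraph.eq_of_reachable hS₁ hS₂ hx hy⟩
  exact fun a => outsideEdgesSubgraph.exists_reachable_mem (hconn.preconnected a u).some hu
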